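/- If Λ is a symbol with rk(Λ) = n and def(Λ) = ±2, then δ(Λ) ≤ n − 1. Moreover δ(Λ) = n−1 if and only if Λ is equivalent to ({k}, {n−k+1, 1, 0}) or ({n−k+1, 1, 0}, {k}) for some 0 ≤ k ≤ n−1. -/

import Mathlib

def srank (Λ : Finset ℕ × Finset ℕ) : ℤ :=
  (∑ a ∈ Λ.1, (a : ℤ)) + (∑ b ∈ Λ.2, (b : ℤ)) -
    ((Λ.1.card + Λ.2.card : ℤ) - 1) ^ 2 / 4

def sdefect (Λ : Finset ℕ × Finset ℕ) : ℤ :=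
  (Λ.1.card : ℤ) - (Λ.2.card : ℤ)

def shiftS (Λ : Finset ℕ × Finset ℕ) : Finset ℕ × Finset ℕ :=
  (Λ.1.image (· + 1) ∪ {0}, Λ.2.image (· + 1) ∪ {0})

def sequiv : (Finset ℕ × Finset ℕ) → (Finset ℕ × Finset ℕ) → Prop :=
  Relation.EqvGen (fun Λ Λ' => Λ' = shiftS Λ)

def upsRowFull (A : Finset ℕ) : List ℤ :=
  ((A.sort (· ≤ ·)).reverse).mapIdx fun i a => (a : ℤ) - ((A.card : ℤ) - 1 - i)

def upsRow (A : Finset ℕ) : List ℤ :=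
  ((upsRowFull A).reverse.dropWhile (· == 0)).reverse

def upsSize (Λ : Finset ℕ × Finset ℕ) : ℤ :=
  (upsRow Λ.1).sum + (upsRow Λ.2).sum

def deltaRow (A : Finset ℕ) : ℤ :=
  if h : A.Nonempty then (A.max' h : ℤ) - ((A.card : ℤ) - 1) else 0

def deltaS (Λ : Finset ℕ × Finset ℕ) : ℤ :=
  deltaRow Λ.1 + deltaRow Λ.2

/-!
For a row `S` of size `c` let the excess be `ε(S) = ΣS − (0 + 1 + ⋯ + (c − 1)) − δ(S)`.
Writing `S = {M} ∪ S'` with `M = max S`, one gets `ε(S) = ΣS' − (0 + 1 + ⋯ + (c − 2)) ≥ 0`, with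
equality exactly when `S = {M, c − 2, …, 1, 0}`. Since one of `def(Λ)` and `|A| + |B| − 1` is even,
the two floors in `rk` combine exactly, giving `rk(Λ) = δ(Λ) + ⌊def(Λ)² / 4⌋ + ε(A) + ε(B)`.
For defect `±2` this reads `n = δ(Λ) + 1 + ε(A) + ε(B)`, so `δ(Λ) ≤ n − 1`, with equality iff both
rows have the extremal shape. A symbol with extremal rows and `|A| = |B| + 2` is
`({a, 1, 0}, {k})` shifted `|B| − 1` times (if `B = ∅`, shifting it once gives
`({a, 1, 0}, {0})`), and `δ` is shift-invariant.
-/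

open Finset

theorem card_le_of_forall_lt {s : Finset ℕ} {M : ℕ} (h : ∀ x ∈ s, x < M) : #s ≤ M := by
  simpa using card_le_card (fun x hx => mem_range.2 (h x hx))

theorem sum_range_card_le_sum (S : Finset ℕ) : ∑ i ∈ range #S, i ≤ ∑ a ∈ S, a := by
  induction S using Finset.induction_on_max with
  | empty => simp
  | insert M s hlt ih =>
    have hM := card_le_of_forall_lt hlt
    rw [card_insert_of_notMem (fun h => (hlt M h).false), sum_range_succ,
      sum_insert (fun h => (hlt M h).false)]
    omega

theorem eq_range_card_of_sum_le {S : Finset ℕ} (h : ∑ a ∈ S, a ≤ ∑ i ∈ range #S, i) :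
    S = range #S := by
  induction S using Finset.induction_on_max with
  | empty => simp
  | insert M s hlt ih =>
    have hMs : M ∉ s := fun h => (hlt M h).false
    have hM := card_le_of_forall_lt hlt
    rw [card_insert_of_notMem hMs] at h ⊢
    rw [sum_range_succ, sum_insert hMs] at h
    have hs := sum_range_card_le_sum s
    obtain rfl : M = #s := by omega
    rw [range_add_one, ← ih (by omega)]

theorem deltaRow_insert_of_forall_lt {M : ℕ} {s : Finset ℕ} (h : ∀ x ∈ s, x < M) :
    deltaRow (insert M s) = M - #s := by
  have hmax : (insert M s).max' (insert_nonempty M s) = M :=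
    le_antisymm (max'_le _ _ _ (by simpa using fun x hx => (h x hx).le))
      (le_max' _ _ (mem_insert_self M s))
  rw [deltaRow, dif_pos (insert_nonempty M s), hmax,
    card_insert_of_notMem (fun hM => (h M hM).false)]
  push_cast; ring

theorem deltaRow_nonneg (S : Finset ℕ) : 0 ≤ deltaRow S := by
  induction S using Finset.induction_on_max with
  | empty => simp [deltaRow]
  | insert M s hlt _ =>
    have hM := card_le_of_forall_lt hlt
    rw [deltaRow_insert_of_forall_lt hlt]
    omega

theorem deltaS_nonneg (Λ : Finset ℕ × Finset ℕ) : 0 ≤ deltaS Λ :=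
  add_nonneg (deltaRow_nonneg _) (deltaRow_nonneg _)

def rowExcess (S : Finset ℕ) : ℤ :=
  ((∑ a ∈ S, a : ℕ) : ℤ) - ((∑ i ∈ range #S, i : ℕ) : ℤ) - deltaRow S

theorem rowExcess_insert_of_forall_lt {M : ℕ} {s : Finset ℕ} (h : ∀ x ∈ s, x < M) :
    rowExcess (insert M s) = ((∑ a ∈ s, a : ℕ) : ℤ) - ((∑ i ∈ range #s, i : ℕ) : ℤ) := by
  have hMs : M ∉ s := fun hM => (h M hM).false
  rw [rowExcess, deltaRow_insert_of_forall_lt h, card_insert_of_notMem hMs, sum_range_succ,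
    sum_insert hMs]
  push_cast; ring

theorem rowExcess_nonneg (S : Finset ℕ) : 0 ≤ rowExcess S := by
  induction S using Finset.induction_on_max with
  | empty => simp [rowExcess, deltaRow]
  | insert M s hlt _ =>
    rw [rowExcess_insert_of_forall_lt hlt, sub_nonneg]
    exact_mod_cast sum_range_card_le_sum s

theorem exists_eq_insert_range_of_rowExcess_eq_zero {S : Finset ℕ} (hS : S.Nonempty)
    (h : rowExcess S = 0) : ∃ M, #S ≤ M + 1 ∧ S = insert M (range (#S - 1)) := by
  induction S using Finset.induction_on_max with
  | empty => simp at hS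
  | insert M s hlt _ =>
    have hMs : M ∉ s := fun hM => (hlt M hM).false
    have hM := card_le_of_forall_lt hlt
    rw [rowExcess_insert_of_forall_lt hlt, sub_eq_zero] at h
    have hs : s = range #s := eq_range_card_of_sum_le (by exact_mod_cast h.le)
    refine ⟨M, ?_, ?_⟩ <;> rw [card_insert_of_notMem hMs]
    · omega
    · rw [Nat.add_sub_cancel, ← hs]

theorem two_mul_cast_sum_range (c : ℕ) : 2 * ((∑ i ∈ range c, i : ℕ) : ℤ) = c * (c - 1) := by
  induction c with
  | zero => simp
  | succ c ih => push_cast [sum_range_succ] at ih ⊢; linear_combination ih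

theorem sq_sub_div_four_add_sq_add_sub_one_div_four (p q : ℤ) :
    (p - q) ^ 2 / 4 + (p + q - 1) ^ 2 / 4 = (p * (p - 1) + q * (q - 1)) / 2 := by
  have hsum : (p - q) ^ 2 + (p + q - 1) ^ 2 = 2 * (p * (p - 1) + q * (q - 1)) + 1 := by ring
  obtain ⟨r, hr | hr⟩ : ∃ r, p + q = 2 * r ∨ p + q = 2 * r + 1 := by
    rcases Int.even_or_odd' (p + q) with ⟨r, hr | hr⟩ <;> exact ⟨r, by omega⟩
  · have h4 : (p - q) ^ 2 = 4 * (r - q) ^ 2 := by rw [show p = 2 * r - q by omega]; ring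
    omega
  · have h4 : (p + q - 1) ^ 2 = 4 * r ^ 2 := by rw [hr]; ring
    omega

theorem srank_eq_deltaS_add_rowExcess (Λ : Finset ℕ × Finset ℕ) :
    srank Λ = deltaS Λ + sdefect Λ ^ 2 / 4 + rowExcess Λ.1 + rowExcess Λ.2 := by
  have hp := two_mul_cast_sum_range #Λ.1
  have hq := two_mul_cast_sum_range #Λ.2
  have key := sq_sub_div_four_add_sq_add_sub_one_div_four #Λ.1 #Λ.2
  simp only [srank, deltaS, sdefect, rowExcess]
  push_cast at *
  omega

def shiftRow (S : Finset ℕ) : Finset ℕ :=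
  S.image (· + 1) ∪ {0}

theorem shiftS_eq_prodMap : shiftS = Prod.map shiftRow shiftRow := rfl

theorem shiftRow_empty : shiftRow ∅ = {0} := rfl

theorem shiftRow_insert (a : ℕ) (S : Finset ℕ) :
    shiftRow (insert a S) = insert (a + 1) (shiftRow S) := by
  simp only [shiftRow, image_insert, insert_union]

theorem shiftRow_range (m : ℕ) : shiftRow (range m) = range (m + 1) := by
  ext (_ | x) <;> simp [shiftRow]

theorem card_shiftRow (S : Finset ℕ) : #(shiftRow S) = #S + 1 := by
  rw [shiftRow, union_comm, ← insert_eq, card_insert_of_notMem (by simp),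
    card_image_of_injective _ (add_left_injective 1)]

theorem deltaRow_shiftRow (S : Finset ℕ) : deltaRow (shiftRow S) = deltaRow S := by
  induction S using Finset.induction_on_max with
  | empty => rfl
  | insert M s hlt _ =>
    have hlt' : ∀ x ∈ shiftRow s, x < M + 1 := by
      simp only [shiftRow, mem_union, mem_image, mem_singleton]
      rintro _ (⟨x, hx, rfl⟩ | rfl)
      · exact Nat.add_lt_add_right (hlt x hx) 1
      · exact M.succ_pos
    rw [shiftRow_insert, deltaRow_insert_of_forall_lt hlt', deltaRow_insert_of_forall_lt hlt,
      card_shiftRow]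
    push_cast; ring

theorem deltaS_eq_of_sequiv {Λ Λ' : Finset ℕ × Finset ℕ} (h : sequiv Λ Λ') :
    deltaS Λ = deltaS Λ' := by
  induction h with
  | rel _ _ h => simp only [h, shiftS_eq_prodMap, deltaS, Prod.map, deltaRow_shiftRow]
  | refl => rfl
  | symm _ _ _ ih => exact ih.symm
  | trans _ _ _ _ _ ih₁ ih₂ => exact ih₁.trans ih₂

theorem sequiv.swap {Λ Λ' : Finset ℕ × Finset ℕ} (h : sequiv Λ Λ') :
    sequiv Λ.swap Λ'.swap := by
  induction h with
  | rel _ _ h => exact .rel _ _ (by rw [h]; rfl)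
  | refl => exact .refl _
  | symm _ _ _ ih => exact .symm _ _ ih
  | trans _ _ _ _ _ ih₁ ih₂ => exact .trans _ _ _ ih₁ ih₂

theorem sequiv_iterate_shiftS (Λ : Finset ℕ × Finset ℕ) (j : ℕ) : sequiv Λ (shiftS^[j] Λ) := by
  induction j with
  | zero => exact .refl _
  | succ j ih => exact .trans _ _ _ ih (.rel _ _ (Function.iterate_succ_apply' _ _ _))

theorem shiftRow_iterate_insert_range (x m j : ℕ) :
    shiftRow^[j] (insert x (range m)) = insert (x + j) (range (m + j)) := by
  induction j with
  | zero => rfl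
  | succ j ih => rw [Function.iterate_succ_apply', ih, shiftRow_insert, shiftRow_range]; rfl

theorem insert_range_two (a : ℕ) : insert a (range 2) = {a, 1, 0} := by
  simp [range_add_one]

theorem exists_sequiv_of_card_eq_add_two {A B : Finset ℕ} (hcard : #A = #B + 2)
    (hA : rowExcess A = 0) (hB : rowExcess B = 0) :
    ∃ a k, 2 ≤ a ∧ sequiv (A, B) ({a, 1, 0}, {k}) := by
  obtain ⟨MA, hMA, hAeq⟩ := exists_eq_insert_range_of_rowExcess_eq_zero (card_pos.1 (by omega)) hA
  replace hAeq : A = insert MA (range (#B + 1)) := by rwa [hcard] at hAeq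
  rcases B.eq_empty_or_nonempty with rfl | hBne
  · refine ⟨MA + 1, 0, by simp_all, .rel _ _ ?_⟩
    rw [hAeq, shiftS_eq_prodMap, Prod.map, shiftRow_insert, shiftRow_range, shiftRow_empty,
      card_empty, insert_range_two]
  · obtain ⟨MB, hMB, hBeq⟩ := exists_eq_insert_range_of_rowExcess_eq_zero hBne hB
    obtain ⟨j, hj⟩ : ∃ j, #B = j + 1 := Nat.exists_eq_succ_of_ne_zero hBne.card_ne_zero
    rw [hj, Nat.add_sub_cancel] at hBeq
    rw [hj] at hAeq
    have hshift := sequiv_iterate_shiftS (insert (MA - j) (range 2), insert (MB - j) (range 0)) j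
    rw [shiftS_eq_prodMap, Prod.map_iterate, Prod.map, shiftRow_iterate_insert_range,
      shiftRow_iterate_insert_range, Nat.sub_add_cancel (by omega), Nat.sub_add_cancel (by omega),
      add_comm 2, zero_add, range_zero, insert_empty, insert_range_two] at hshift
    rw [hAeq, hBeq]
    exact ⟨MA - j, MB - j, by omega, hshift.symm⟩

theorem exists_sequiv_of_sdefect {Λ : Finset ℕ × Finset ℕ} (hdef : sdefect Λ = 2 ∨ sdefect Λ = -2)
    (hA : rowExcess Λ.1 = 0) (hB : rowExcess Λ.2 = 0) :
    ∃ a k, 2 ≤ a ∧ (sequiv Λ ({k}, {a, 1, 0}) ∨ sequiv Λ ({a, 1, 0}, {k})) := by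
  rw [sdefect] at hdef
  rcases hdef with hdef | hdef
  · obtain ⟨a, k, ha, h⟩ := exists_sequiv_of_card_eq_add_two (by omega) hA hB
    exact ⟨a, k, ha, .inr h⟩
  · obtain ⟨a, k, ha, h⟩ := exists_sequiv_of_card_eq_add_two (by omega) hB hA
    exact ⟨a, k, ha, .inl h.swap⟩

theorem deltaRow_singleton (k : ℕ) : deltaRow {k} = k := by
  simpa using deltaRow_insert_of_forall_lt (M := k) (s := ∅) (by simp)

theorem deltaRow_insert_one_zero {a : ℕ} (ha : 2 ≤ a) : deltaRow {a, 1, 0} = a - 2 :=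
  deltaRow_insert_of_forall_lt (by simp; omega)

/-- If `rk(Λ) = n` and `def(Λ) = ±2`, then `δ(Λ) ≤ n − 1`; moreover
`δ(Λ) = n − 1` if and only if `Λ` is shift-equivalent to `({k}, {n−k+1, 1, 0})`
or `({n−k+1, 1, 0}, {k})` for some `0 ≤ k ≤ n − 1`. -/
theorem delta_bound_defect_two (Λ : Finset ℕ × Finset ℕ) (n : ℕ)
    (hrk : srank Λ = n) (hdef : sdefect Λ = 2 ∨ sdefect Λ = -2) :
    deltaS Λ ≤ (n : ℤ) - 1 ∧
      (deltaS Λ = (n : ℤ) - 1 ↔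
        ∃ k ≤ n - 1,
          sequiv Λ ({k}, {n - k + 1, 1, 0}) ∨ sequiv Λ ({n - k + 1, 1, 0}, {k})) := by
  have hn : (n : ℤ) = deltaS Λ + 1 + rowExcess Λ.1 + rowExcess Λ.2 := by
    rw [← hrk, srank_eq_deltaS_add_rowExcess]
    rcases hdef with h | h <;> rw [h] <;> rfl
  have hA := rowExcess_nonneg Λ.1
  have hB := rowExcess_nonneg Λ.2
  have hδ := deltaS_nonneg Λ
  have deltaS_of_sequiv {a k : ℕ} (ha : 2 ≤ a)
      (h : sequiv Λ ({k}, {a, 1, 0}) ∨ sequiv Λ ({a, 1, 0}, {k})) :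
      deltaS Λ = a + k - 2 := by
    rcases h with h | h <;>
    · rw [deltaS_eq_of_sequiv h, deltaS]
      simp only [deltaRow_singleton, deltaRow_insert_one_zero ha]
      ring
  refine ⟨by linarith, fun hmax => ?_, fun ⟨k, hk, h⟩ => ?_⟩
  · obtain ⟨a, k, ha, h⟩ := exists_sequiv_of_sdefect hdef (by linarith) (by linarith)
    have := deltaS_of_sequiv ha h
    obtain rfl : a = n - k + 1 := by omega
    exact ⟨k, by omega, h⟩
  · have := deltaS_of_sequiv (by omega) h
    omega
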